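/- Let Γ be a perfect group generated by a finite set S = S⁻¹, and let τ_{S̄}(g) = lim_{n→∞} |gⁿ|_{S̄}/n denote the translation length of the bi-invariant word norm. Then there is a constant ν > 0 such that scl(g) ≤ ν·τ_{S̄}(g) for every g ∈ Γ, where scl(g) = lim_{n→∞} cl(gⁿ)/n is the stable commutator length. -/

import Mathlib

/-!
In a perfect group every generator `s ∈ S` is a product of boundedly many commutators, say at
most `C`, and a conjugate of a product of `k` commutators is again one. So the commutator
length is at most `C` times the bi-invariant word norm `|·|_{S̄}`, pointwise; evaluating at `gⁿ`,
dividing by `n` and letting `n → ∞` gives `scl g ≤ C τ g`.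
-/

/-- The set of all conjugates of elements of `S`. -/
def conjSet {G : Type*} [Group G] (S : Set G) : Set G :=
  {x | ∃ g : G, ∃ s ∈ S, x = g * s * g⁻¹}

/-- The word norm of `g` with respect to a generating set `T`:
the least length of a word in elements of `T` expressing `g`. -/
noncomputable def wordNorm {G : Type*} [Group G] (T : Set G) (g : G) : ℕ :=
  sInf {k | ∃ l : List G, (∀ x ∈ l, x ∈ T) ∧ l.prod = g ∧ l.length = k}

section WordNorm

variable {G : Type*} [Group G] {T : Set G} {g h : G}

lemma wordNorm_le_length {l : List G} (hl : ∀ x ∈ l, x ∈ T) (hprod : l.prod = g) :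
    wordNorm T g ≤ l.length :=
  Nat.sInf_le ⟨l, hl, hprod, rfl⟩

lemma exists_list_length_eq_wordNorm (hg : g ∈ Submonoid.closure T) :
    ∃ l : List G, (∀ x ∈ l, x ∈ T) ∧ l.prod = g ∧ l.length = wordNorm T g := by
  obtain ⟨l, hl, hprod⟩ := Submonoid.exists_list_of_mem_closure hg
  have hne : {k | ∃ l : List G, (∀ x ∈ l, x ∈ T) ∧ l.prod = g ∧ l.length = k}.Nonempty :=
    ⟨l.length, l, hl, hprod, rfl⟩
  exact Nat.sInf_mem hne

lemma wordNorm_mul_le (hg : g ∈ Submonoid.closure T) (hh : h ∈ Submonoid.closure T) :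
    wordNorm T (g * h) ≤ wordNorm T g + wordNorm T h := by
  obtain ⟨l, hl, rfl, hlen⟩ := exists_list_length_eq_wordNorm hg
  obtain ⟨m, hm, rfl, hmlen⟩ := exists_list_length_eq_wordNorm hh
  rw [← hlen, ← hmlen, ← List.length_append]
  exact wordNorm_le_length (fun x hx => (List.mem_append.1 hx).elim (hl x) (hm x))
    List.prod_append

lemma wordNorm_list_prod_le {C : ℕ} {l : List G}
    (hl : ∀ x ∈ l, x ∈ Submonoid.closure T ∧ wordNorm T x ≤ C) :
    wordNorm T l.prod ≤ C * l.length := by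
  induction l with
  | nil => simpa using wordNorm_le_length (T := T) (l := []) (by simp) rfl
  | cons x t ih =>
    have hx := hl x List.mem_cons_self
    have ht : ∀ y ∈ t, y ∈ Submonoid.closure T ∧ wordNorm T y ≤ C :=
      fun y hy => hl y (List.mem_cons_of_mem x hy)
    have htprod : t.prod ∈ Submonoid.closure T := list_prod_mem fun y hy => (ht y hy).1
    calc wordNorm T (x :: t).prod ≤ wordNorm T x + wordNorm T t.prod := by
          rw [List.prod_cons]; exact wordNorm_mul_le hx.1 htprod
      _ ≤ C + C * t.length := Nat.add_le_add hx.2 (ih ht)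
      _ = C * (x :: t).length := by rw [List.length_cons]; ring

lemma list_prod_map_conj (g : G) (l : List G) :
    (l.map fun x => g * x * g⁻¹).prod = g * l.prod * g⁻¹ := by
  induction l with
  | nil => simp
  | cons x t ih => simp only [List.map_cons, List.prod_cons, ih]; group

lemma conj_mem_closure_and_wordNorm_le (hT : ∀ g, ∀ x ∈ T, g * x * g⁻¹ ∈ T)
    (hh : h ∈ Submonoid.closure T) (g : G) :
    g * h * g⁻¹ ∈ Submonoid.closure T ∧ wordNorm T (g * h * g⁻¹) ≤ wordNorm T h := by
  obtain ⟨l, hl, rfl, hlen⟩ := exists_list_length_eq_wordNorm hh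
  have hmap : ∀ y ∈ l.map fun x => g * x * g⁻¹, y ∈ T := by
    simp only [List.mem_map]
    rintro _ ⟨x, hx, rfl⟩
    exact hT g x (hl x hx)
  rw [← list_prod_map_conj]
  refine ⟨list_prod_mem fun y hy => Submonoid.subset_closure (hmap y hy), ?_⟩
  exact (wordNorm_le_length hmap rfl).trans (by rw [List.length_map, hlen])

lemma wordNorm_le_mul_wordNorm_conjSet {S : Set G} {C : ℕ}
    (hT : ∀ g, ∀ x ∈ T, g * x * g⁻¹ ∈ T)
    (hS : ∀ s ∈ S, s ∈ Submonoid.closure T ∧ wordNorm T s ≤ C)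
    (hg : g ∈ Submonoid.closure (conjSet S)) :
    wordNorm T g ≤ C * wordNorm (conjSet S) g := by
  obtain ⟨l, hl, rfl, hlen⟩ := exists_list_length_eq_wordNorm hg
  rw [← hlen]
  refine wordNorm_list_prod_le fun x hx => ?_
  obtain ⟨a, s, hs, rfl⟩ := hl x hx
  obtain ⟨hmem, hle⟩ := conj_mem_closure_and_wordNorm_le hT (hS s hs).1 a
  exact ⟨hmem, hle.trans (hS s hs).2⟩

end WordNorm

lemma subset_conjSet {G : Type*} [Group G] (S : Set G) : S ⊆ conjSet S :=
  fun s hs => ⟨1, s, hs, by group⟩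

lemma Subgroup.mem_submonoidClosure_of_inv_subset {G : Type*} [Group G] {T : Set G}
    (hT : T⁻¹ ⊆ T) {g : G} (hg : g ∈ Subgroup.closure T) : g ∈ Submonoid.closure T := by
  rwa [← Subgroup.mem_toSubmonoid, Subgroup.closure_toSubmonoid, Set.union_eq_left.2 hT] at hg

lemma inv_commutatorSet_subset (G : Type*) [Group G] : (commutatorSet G)⁻¹ ⊆ commutatorSet G := by
  rintro _ ⟨a, b, hab⟩
  exact ⟨b, a, by rw [← commutatorElement_inv, hab, inv_inv]⟩

lemma conj_mem_commutatorSet {G : Type*} [Group G] (g : G) {x : G} (hx : x ∈ commutatorSet G) :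
    g * x * g⁻¹ ∈ commutatorSet G := by
  obtain ⟨a, b, rfl⟩ := hx
  exact ⟨g * a * g⁻¹, g * b * g⁻¹, (conjugate_commutatorElement a b g).symm⟩

lemma le_mul_of_tendsto_div_of_le_mul {f h : ℕ → ℕ} {a b C : ℝ}
    (hfh : ∀ n, (f n : ℝ) ≤ C * h n)
    (hf : Filter.Tendsto (fun n : ℕ => (f n : ℝ) / n) Filter.atTop (nhds a))
    (hh : Filter.Tendsto (fun n : ℕ => (h n : ℝ) / n) Filter.atTop (nhds b)) :
    a ≤ C * b :=
  le_of_tendsto_of_tendsto' hf (hh.const_mul C) fun n => by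
    rw [← mul_div_assoc]
    exact div_le_div_of_nonneg_right (hfh n) n.cast_nonneg

/-- On a perfect group generated by a finite symmetric set S, the stable
commutator length scl(g) = lim cl(gⁿ)/n is bounded by a multiple of the
translation length τ_{S̄}(g) = lim |gⁿ|_{S̄}/n of the bi-invariant word norm. -/
theorem scl_le_translation_length {Γ : Type*} [Group Γ]
    (S : Set Γ) (hfin : S.Finite) (hinv : S⁻¹ = S)
    (hgen : Subgroup.closure S = ⊤)
    (hperf : commutator Γ = ⊤) :
    ∃ ν : ℝ, 0 < ν ∧ ∀ g : Γ, ∀ sclg τg : ℝ,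
      Filter.Tendsto (fun n : ℕ => (wordNorm (commutatorSet Γ) (g ^ n) : ℝ) / n)
        Filter.atTop (nhds sclg) →
      Filter.Tendsto (fun n : ℕ => (wordNorm (conjSet S) (g ^ n) : ℝ) / n)
        Filter.atTop (nhds τg) →
      sclg ≤ ν * τg := by
  have hcl : ∀ x : Γ, x ∈ Submonoid.closure (commutatorSet Γ) := fun x =>
    Subgroup.mem_submonoidClosure_of_inv_subset (inv_commutatorSet_subset Γ)
      (by rw [← commutator_eq_closure, hperf]; trivial)
  have hconj : ∀ x : Γ, x ∈ Submonoid.closure (conjSet S) := fun x =>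
    Submonoid.closure_mono (subset_conjSet S)
      (Subgroup.mem_submonoidClosure_of_inv_subset hinv.subset (by rw [hgen]; trivial))
  obtain ⟨C, hC⟩ := (hfin.image (wordNorm (commutatorSet Γ))).bddAbove
  have hbound : ∀ x : Γ,
      wordNorm (commutatorSet Γ) x ≤ (C + 1) * wordNorm (conjSet S) x := fun x =>
    wordNorm_le_mul_wordNorm_conjSet (fun g _ => conj_mem_commutatorSet g)
      (fun s hs => ⟨hcl s, (hC ⟨s, hs, rfl⟩).trans C.le_succ⟩) (hconj x)
  refine ⟨C + 1, by positivity, fun g sclg τg hscl hτ => ?_⟩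
  exact le_mul_of_tendsto_div_of_le_mul
    (fun n => by exact_mod_cast hbound (g ^ n)) hscl hτ
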